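/- Let H be a real Hilbert space with fundamental symmetry Θ and Krein inner product B(x, y) := ⟪x, Θ y⟫, with positive part V⁺ := ker(Θ − id) and negative part V⁻ := ker(Θ + id). Then H admits a closed hypermaximal neutral subspace (a closed subspace W with W = {v ∈ H : B(v, w) = 0 for all w ∈ W}) if and only if there exists a surjective ℝ-linear isometry (with respect to the Hilbert inner product ⟪·,·⟫) from V⁺ onto V⁻. -/
import Mathlib
open scoped RealInnerProductSpace

section aux
variable {H : Type*} [NormedAddCommGroup H] [InnerProductSpace ℝ H]

noncomputable def Pp (Θ : H →L[ℝ] H) : H →L[ℝ] H :=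
  (2⁻¹ : ℝ) • (ContinuousLinearMap.id ℝ H + Θ)
noncomputable def Pm (Θ : H →L[ℝ] H) : H →L[ℝ] H :=
  (2⁻¹ : ℝ) • (ContinuousLinearMap.id ℝ H - Θ)

variable (Θ : H →L[ℝ] H)
lemma Pp_apply (x : H) : Pp Θ x = (2⁻¹ : ℝ) • (x + Θ x) := rfl
lemma Pm_apply (x : H) : Pm Θ x = (2⁻¹ : ℝ) • (x - Θ x) := rfl
lemma Pp_add_Pm (x : H) : Pp Θ x + Pm Θ x = x := by
  rw [Pp_apply, Pm_apply, ← smul_add]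
  rw [show x + Θ x + (x - Θ x) = (2:ℝ) • x by rw [two_smul]; abel, smul_smul]
  norm_num
lemma mem_Vp_iff (x : H) :
    x ∈ LinearMap.ker ((Θ : H →ₗ[ℝ] H) - LinearMap.id) ↔ Θ x = x := by
  simp [LinearMap.mem_ker, sub_eq_zero]
lemma mem_Vm_iff (x : H) :
    x ∈ LinearMap.ker ((Θ : H →ₗ[ℝ] H) + LinearMap.id) ↔ Θ x = -x := by
  simp [LinearMap.mem_ker, add_eq_zero_iff_eq_neg]
lemma theta_Pp (hΘ2 : ∀ x, Θ (Θ x) = x) (x : H) : Θ (Pp Θ x) = Pp Θ x := by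
  simp [Pp_apply, map_smul, map_add, hΘ2, smul_add, add_comm]
lemma theta_Pm (hΘ2 : ∀ x, Θ (Θ x) = x) (x : H) : Θ (Pm Θ x) = -(Pm Θ x) := by
  simp only [Pm_apply, map_smul, map_sub, hΘ2, ← smul_neg, neg_sub]
lemma Pp_eq_self {x : H} (hx : Θ x = x) : Pp Θ x = x := by
  rw [Pp_apply, hx, ← two_smul ℝ, smul_smul]; norm_num
lemma Pm_eq_zero {x : H} (hx : Θ x = x) : Pm Θ x = 0 := by
  rw [Pm_apply, hx, sub_self, smul_zero]
lemma Pp_eq_zero {x : H} (hx : Θ x = -x) : Pp Θ x = 0 := by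
  rw [Pp_apply, hx, add_neg_cancel, smul_zero]
lemma Pm_eq_self {x : H} (hx : Θ x = -x) : Pm Θ x = x := by
  rw [Pm_apply, hx, sub_neg_eq_add, ← two_smul ℝ, smul_smul]; norm_num
lemma inner_pm (hΘsym : ∀ x y, ⟪Θ x, y⟫ = ⟪x, Θ y⟫)
    (u v : H) (hu : Θ u = u) (hv : Θ v = -v) : ⟪u, v⟫ = 0 := by
  have h : ⟪u, v⟫ = -⟪u, v⟫ := by
    conv_lhs => rw [← hu]
    rw [hΘsym, hv, inner_neg_right]
  linarith
lemma inner_theta (hΘ2 : ∀ x, Θ (Θ x) = x) (hΘsym : ∀ x y, ⟪Θ x, y⟫ = ⟪x, Θ y⟫) (x y : H) :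
    ⟪x, Θ y⟫ = ⟪Pp Θ x, Pp Θ y⟫ - ⟪Pm Θ x, Pm Θ y⟫ := by
  have hy : Θ y = Pp Θ y - Pm Θ y := by
    rw [Pp_apply, Pm_apply, ← smul_sub,
      show y + Θ y - (y - Θ y) = (2:ℝ) • Θ y by rw [two_smul]; abel, smul_smul]
    norm_num
  have h1 : ⟪Pp Θ x, Pm Θ y⟫ = 0 :=
    inner_pm Θ hΘsym _ _ (theta_Pp Θ hΘ2 x) (theta_Pm Θ hΘ2 y)
  have h2 : ⟪Pm Θ x, Pp Θ y⟫ = 0 := by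
    rw [real_inner_comm]
    exact inner_pm Θ hΘsym _ _ (theta_Pp Θ hΘ2 y) (theta_Pm Θ hΘ2 x)
  calc ⟪x, Θ y⟫ = ⟪Pp Θ x + Pm Θ x, Pp Θ y - Pm Θ y⟫ := by rw [Pp_add_Pm, ← hy]
    _ = _ := by rw [inner_add_left, inner_sub_right, inner_sub_right, h1, h2]; ring
lemma inner_self_decomp (hΘ2 : ∀ x, Θ (Θ x) = x) (hΘsym : ∀ x y, ⟪Θ x, y⟫ = ⟪x, Θ y⟫) (x y : H) :
    ⟪x, y⟫ = ⟪Pp Θ x, Pp Θ y⟫ + ⟪Pm Θ x, Pm Θ y⟫ := by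
  have h1 : ⟪Pp Θ x, Pm Θ y⟫ = 0 :=
    inner_pm Θ hΘsym _ _ (theta_Pp Θ hΘ2 x) (theta_Pm Θ hΘ2 y)
  have h2 : ⟪Pm Θ x, Pp Θ y⟫ = 0 := by
    rw [real_inner_comm]
    exact inner_pm Θ hΘsym _ _ (theta_Pp Θ hΘ2 y) (theta_Pm Θ hΘ2 x)
  calc ⟪x, y⟫ = ⟪Pp Θ x + Pm Θ x, Pp Θ y + Pm Θ y⟫ := by rw [Pp_add_Pm, Pp_add_Pm]
    _ = _ := by rw [inner_add_left, inner_add_right, inner_add_right, h1, h2]; ring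
end aux

lemma surj_helper {E F : Type*} [NormedAddCommGroup E] [InnerProductSpace ℝ E]
    [NormedAddCommGroup F] [InnerProductSpace ℝ F] [CompleteSpace E] [CompleteSpace F]
    (T : E →ₗ[ℝ] F) (hub : ∀ x, ‖T x‖ ≤ ‖x‖) (hlb : ∀ x, ‖x‖ ≤ 2 * ‖T x‖)
    (hdense : ∀ u : F, (∀ x, ⟪T x, u⟫ = 0) → u = 0) : Function.Surjective T := by
  have hanti : AntilipschitzWith 2 T := by
    apply AddMonoidHomClass.antilipschitz_of_bound
    intro x
    simpa using hlb x
  have hcont : UniformContinuous T := by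
    have := AddMonoidHomClass.lipschitz_of_bound T 1 (fun x => by simpa using hub x)
    exact this.uniformContinuous
  have hclosed : IsClosed (Set.range T) := hanti.isClosed_range hcont
  have hrange : (LinearMap.range T).topologicalClosure = LinearMap.range T := by
    apply IsClosed.submodule_topologicalClosure_eq
    rw [LinearMap.coe_range]
    exact hclosed
  have horth : (LinearMap.range T)ᗮ = ⊥ := by
    rw [Submodule.eq_bot_iff]
    intro u hu
    apply hdense
    intro x
    exact (Submodule.mem_orthogonal _ u).mp hu (T x) (LinearMap.mem_range_self T x)
  have : LinearMap.range T = ⊤ := by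
    rw [← hrange, Submodule.topologicalClosure_eq_top_iff, horth]
  exact LinearMap.range_eq_top.mp this

set_option maxHeartbeats 2000000 in
/-- A real Krein space admits a closed hypermaximal neutral subspace iff
there is a surjective ℝ-linear isometry (for the Hilbert inner product) from the positive
part `V⁺ = ker (Θ - id)` onto the negative part `V⁻ = ker (Θ + id)`. -/
theorem stmt_3 {H : Type*} [NormedAddCommGroup H] [InnerProductSpace ℝ H] [CompleteSpace H]
    (Θ : H →L[ℝ] H) (hΘ2 : ∀ x, Θ (Θ x) = x)
    (hΘsym : ∀ x y, ⟪Θ x, y⟫ = ⟪x, Θ y⟫) :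
    (∃ W : Submodule ℝ H, IsClosed (W : Set H) ∧
        (W : Set H) = {v : H | ∀ w ∈ W, ⟪v, Θ w⟫ = 0}) ↔
      (∃ f : LinearMap.ker ((Θ : H →ₗ[ℝ] H) - LinearMap.id) →ₗ[ℝ]
             LinearMap.ker ((Θ : H →ₗ[ℝ] H) + LinearMap.id),
        Function.Surjective f ∧ ∀ x y, ⟪(f x : H), (f y : H)⟫ = ⟪(x : H), (y : H)⟫) := by
  set Vp := LinearMap.ker ((Θ : H →ₗ[ℝ] H) - LinearMap.id) with hVp
  set Vm := LinearMap.ker ((Θ : H →ₗ[ℝ] H) + LinearMap.id) with hVm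
  have hpmem : ∀ x : H, Pp Θ x ∈ Vp := fun x => (mem_Vp_iff Θ _).mpr (theta_Pp Θ hΘ2 x)
  have hmmem : ∀ x : H, Pm Θ x ∈ Vm := fun x => (mem_Vm_iff Θ _).mpr (theta_Pm Θ hΘ2 x)
  constructor
  · rintro ⟨W, hWclosed, hWeq⟩
    have hWmem : ∀ w ∈ W, ∀ w' ∈ W, ⟪w, Θ w'⟫ = 0 := by
      intro w hw
      exact hWeq.subset (SetLike.mem_coe.mpr hw)
    have hWinner : ∀ w ∈ W, ∀ w' ∈ W, ⟪Pp Θ w, Pp Θ w'⟫ = ⟪Pm Θ w, Pm Θ w'⟫ := by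
      intro w hw w' hw'
      have h0 := hWmem w hw w' hw'
      rw [inner_theta Θ hΘ2 hΘsym] at h0
      linarith
    haveI : CompleteSpace W := hWclosed.completeSpace_coe
    have hVpc : IsClosed (Vp : Set H) := by
      have : (Vp : Set H) = (fun x => Θ x - x) ⁻¹' {0} := by
        ext x
        simp [hVp, LinearMap.mem_ker, sub_eq_zero]
      rw [this]
      exact isClosed_singleton.preimage (Θ.continuous.sub continuous_id)
    have hVmc : IsClosed (Vm : Set H) := by
      have : (Vm : Set H) = (fun x => Θ x + x) ⁻¹' {0} := by
        ext x
        simp [hVm, LinearMap.mem_ker]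
      rw [this]
      exact isClosed_singleton.preimage (Θ.continuous.add continuous_id)
    haveI : CompleteSpace Vp := hVpc.completeSpace_coe
    haveI : CompleteSpace Vm := hVmc.completeSpace_coe
    set φ : ↥W →ₗ[ℝ] ↥Vp :=
      LinearMap.codRestrict Vp ((Pp Θ : H →ₗ[ℝ] H) ∘ₗ W.subtype) (fun w => hpmem _) with hφdef
    set ψ : ↥W →ₗ[ℝ] ↥Vm :=
      LinearMap.codRestrict Vm ((Pm Θ : H →ₗ[ℝ] H) ∘ₗ W.subtype) (fun w => hmmem _) with hψdef
    have hφ : ∀ w : W, (φ w : H) = Pp Θ (w : H) := fun w => rfl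
    have hψ : ∀ w : W, (ψ w : H) = Pm Θ (w : H) := fun w => rfl
    have hnormsq : ∀ w : W, ‖(w : H)‖ ^ 2 = 2 * ‖(φ w : H)‖ ^ 2 ∧
        ‖(w : H)‖ ^ 2 = 2 * ‖(ψ w : H)‖ ^ 2 := by
      intro w
      have h1 := inner_self_decomp Θ hΘ2 hΘsym (w : H) (w : H)
      have h2 := hWinner _ w.2 _ w.2
      simp only [real_inner_self_eq_norm_sq] at h1 h2
      rw [hφ, hψ]
      constructor <;> linarith
    have hubφ : ∀ w : W, ‖φ w‖ ≤ ‖w‖ := by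
      intro w
      have h := (hnormsq w).1
      rw [Submodule.norm_coe, Submodule.norm_coe] at h
      nlinarith [norm_nonneg (φ w), norm_nonneg w]
    have hlbφ : ∀ w : W, ‖w‖ ≤ 2 * ‖φ w‖ := by
      intro w
      have h := (hnormsq w).1
      rw [Submodule.norm_coe, Submodule.norm_coe] at h
      nlinarith [norm_nonneg (φ w), norm_nonneg w]
    have hubψ : ∀ w : W, ‖ψ w‖ ≤ ‖w‖ := by
      intro w
      have h := (hnormsq w).2
      rw [Submodule.norm_coe, Submodule.norm_coe] at h
      nlinarith [norm_nonneg (ψ w), norm_nonneg w]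
    have hlbψ : ∀ w : W, ‖w‖ ≤ 2 * ‖ψ w‖ := by
      intro w
      have h := (hnormsq w).2
      rw [Submodule.norm_coe, Submodule.norm_coe] at h
      nlinarith [norm_nonneg (ψ w), norm_nonneg w]
    have hφinj : Function.Injective φ := by
      intro a b hab
      have h1 : φ (a - b) = 0 := by rw [map_sub, hab, sub_self]
      have h2 := hlbφ (a - b)
      rw [h1, norm_zero, mul_zero] at h2
      have := norm_le_zero_iff.mp h2
      rwa [sub_eq_zero] at this
    have hφsurj : Function.Surjective φ := by
      apply surj_helper φ hubφ hlbφ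
      intro u hu
      have hΘu : Θ (u : H) = (u : H) := (mem_Vp_iff Θ _).mp u.2
      have huW : (u : H) ∈ W := by
        rw [← SetLike.mem_coe, hWeq]
        intro w hw
        rw [inner_theta Θ hΘ2 hΘsym, Pp_eq_self Θ hΘu, Pm_eq_zero Θ hΘu,
          inner_zero_left, sub_zero]
        have h := hu ⟨w, hw⟩
        rw [Submodule.coe_inner, hφ] at h
        rw [real_inner_comm]
        exact h
      have h0 := hWmem _ huW _ huW
      rw [hΘu, real_inner_self_eq_norm_sq] at h0
      have : (u : H) = 0 := by
        rw [← norm_eq_zero]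
        nlinarith [norm_nonneg (u : H)]
      exact Submodule.coe_eq_zero.mp this
    have hψsurj : Function.Surjective ψ := by
      apply surj_helper ψ hubψ hlbψ
      intro u hu
      have hΘu : Θ (u : H) = -(u : H) := (mem_Vm_iff Θ _).mp u.2
      have huW : (u : H) ∈ W := by
        rw [← SetLike.mem_coe, hWeq]
        intro w hw
        rw [inner_theta Θ hΘ2 hΘsym, Pp_eq_zero Θ hΘu, Pm_eq_self Θ hΘu,
          inner_zero_left, zero_sub, neg_eq_zero]
        have h := hu ⟨w, hw⟩
        rw [Submodule.coe_inner, hψ] at h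
        rw [real_inner_comm]
        exact h
      have h0 := hWmem _ huW _ huW
      rw [hΘu, inner_neg_right, real_inner_self_eq_norm_sq, neg_eq_zero] at h0
      have : (u : H) = 0 := by
        rw [← norm_eq_zero]
        nlinarith [norm_nonneg (u : H)]
      exact Submodule.coe_eq_zero.mp this
    set e : ↥W ≃ₗ[ℝ] ↥Vp := LinearEquiv.ofBijective φ ⟨hφinj, hφsurj⟩ with he
    refine ⟨ψ ∘ₗ (e.symm : ↥Vp →ₗ[ℝ] ↥W), ?_, ?_⟩
    · intro y
      obtain ⟨w, hw⟩ := hψsurj y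
      refine ⟨e w, ?_⟩
      simp only [LinearMap.coe_comp, Function.comp_apply, LinearEquiv.coe_coe]
      rw [LinearEquiv.symm_apply_apply]
      exact hw
    · intro x y
      have hx : Pp Θ ((e.symm x : W) : H) = (x : H) := by
        have := e.apply_symm_apply x
        have h2 : φ (e.symm x) = x := this
        rw [← hφ, h2]
      have hy : Pp Θ ((e.symm y : W) : H) = (y : H) := by
        have := e.apply_symm_apply y
        have h2 : φ (e.symm y) = y := this
        rw [← hφ, h2]
      simp only [LinearMap.coe_comp, Function.comp_apply, LinearEquiv.coe_coe]
      rw [hψ, hψ, ← hWinner _ (e.symm x).2 _ (e.symm y).2, hx, hy]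
  · rintro ⟨f, hfsurj, hfinner⟩
    -- f is norm preserving, hence continuous
    have hfnorm : ∀ u : Vp, ‖(f u : H)‖ = ‖(u : H)‖ := by
      intro u
      have h := hfinner u u
      rw [real_inner_self_eq_norm_sq, real_inner_self_eq_norm_sq] at h
      exact (sq_eq_sq₀ (norm_nonneg _) (norm_nonneg _)).mp h
    have hfcont : Continuous f := by
      apply AddMonoidHomClass.continuous_of_bound f 1
      intro u
      rw [one_mul]
      exact le_of_eq (hfnorm u)
    -- the graph of f
    set G : H →ₗ[ℝ] H :=
      ((Pm Θ : H →ₗ[ℝ] H)) -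
        (Vm.subtype ∘ₗ f ∘ₗ LinearMap.codRestrict Vp (Pp Θ : H →ₗ[ℝ] H) hpmem) with hG
    have hGapply : ∀ x : H, G x = Pm Θ x - (f ⟨Pp Θ x, hpmem x⟩ : H) := fun x => rfl
    set W := LinearMap.ker G with hW
    have hmemW : ∀ x : H, x ∈ W ↔ Pm Θ x = (f ⟨Pp Θ x, hpmem x⟩ : H) := by
      intro x
      rw [hW, LinearMap.mem_ker, hGapply, sub_eq_zero]
    refine ⟨W, ?_, ?_⟩
    · have hGcont : Continuous G := by
        have : Continuous fun x : H => (⟨Pp Θ x, hpmem x⟩ : Vp) :=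
          Continuous.subtype_mk (Pp Θ).continuous _
        exact ((Pm Θ).continuous).sub (continuous_subtype_val.comp (hfcont.comp this))
      have : (W : Set H) = G ⁻¹' {0} := by
        ext x; simp [hW, LinearMap.mem_ker]
      rw [this]
      exact isClosed_singleton.preimage hGcont
    · ext v
      simp only [SetLike.mem_coe, Set.mem_setOf_eq]
      constructor
      · intro hv w hw
        rw [inner_theta Θ hΘ2 hΘsym, (hmemW v).mp hv, (hmemW w).mp hw, hfinner, sub_self]
      · intro hv
        obtain ⟨c, hc⟩ := hfsurj ⟨Pm Θ v, hmmem v⟩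
        have hgraph : ∀ u : Vp, ((u : H) + (f u : H)) ∈ W := by
          intro u
          rw [hmemW]
          have h1 : Pp Θ ((u:H) + (f u : H)) = (u : H) := by
            rw [map_add, Pp_eq_self Θ ((mem_Vp_iff Θ _).mp u.2),
              Pp_eq_zero Θ ((mem_Vm_iff Θ _).mp (f u).2), add_zero]
          have h2 : Pm Θ ((u:H) + (f u : H)) = (f u : H) := by
            rw [map_add, Pm_eq_zero Θ ((mem_Vp_iff Θ _).mp u.2),
              Pm_eq_self Θ ((mem_Vm_iff Θ _).mp (f u).2), zero_add]
          rw [h2]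
          exact congrArg (fun z : Vp => ((f z : Vm) : H)) (Subtype.ext h1).symm
        have key : ∀ u : Vp, ⟪Pp Θ v - (c : H), (u : H)⟫ = 0 := by
          intro u
          have h0 := hv _ (hgraph u)
          rw [inner_theta Θ hΘ2 hΘsym] at h0
          have h1 : Pp Θ ((u:H) + (f u : H)) = (u : H) := by
            rw [map_add, Pp_eq_self Θ ((mem_Vp_iff Θ _).mp u.2),
              Pp_eq_zero Θ ((mem_Vm_iff Θ _).mp (f u).2), add_zero]
          have h2 : Pm Θ ((u:H) + (f u : H)) = (f u : H) := by
            rw [map_add, Pm_eq_zero Θ ((mem_Vp_iff Θ _).mp u.2),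
              Pm_eq_self Θ ((mem_Vm_iff Θ _).mp (f u).2), zero_add]
          rw [h1, h2] at h0
          have h3 : ⟪Pm Θ v, (f u : H)⟫ = ⟪(c : H), (u : H)⟫ := by
            have : Pm Θ v = ((f c : Vm) : H) := by rw [hc]
            rw [this, hfinner]
          rw [h3] at h0
          rw [inner_sub_left]
          linarith
        have hPpc : Pp Θ v = (c : H) := by
          have := key (⟨Pp Θ v, hpmem v⟩ - c)
          simp only [Submodule.coe_sub] at this
          exact sub_eq_zero.mp (inner_self_eq_zero.mp this)
        rw [hmemW]
        have : (⟨Pp Θ v, hpmem v⟩ : Vp) = c := Subtype.ext hPpc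
        rw [this, hc]
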